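/- arXiv:1607.05892 — 3 statements merged into one kernel-verified Lean document; each statement's English description precedes it below -/
import Mathlib

section
/- Let S be a thick generalized quadrangle and S' a thick full subquadrangle of S that is a geometrical hyperplane of S, with A, E and the canonical projection π : A → E as defined. For distinct points u and v of A: π(u) = π(v) (i.e., the subtended ovoids O_u and O_v coincide) if and only if no point of A is collinear in S with both u and v. -/
namespace GQpaper

variable {P L : Type}

/-- Two points of a point-line geometry are collinear: they are equal or lie on a
common line. -/
def Collinear (I : P → L → Prop) (x y : P) : Prop :=
  x = y ∨ ∃ l : L, I x l ∧ I y l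

/-- Generalized quadrangle axioms: two distinct points are on at most one common line,
and for every non-incident point-line pair `(x, l)` there is a unique pair `(y, M)`
with `x I M`, `y I M`, `y I l`. -/
def IsGQ (I : P → L → Prop) : Prop :=
  (∀ x y : P, x ≠ y → ∀ M N : L, I x M → I y M → I x N → I y N → M = N) ∧
  (∀ (x : P) (l : L), ¬ I x l → ∃! p : P × L, I x p.2 ∧ I p.1 p.2 ∧ I p.1 l)

/-- Thick: every line has at least 3 points and every point is on at least 3 lines. -/
def Thick (I : P → L → Prop) : Prop :=
  (∀ l : L, ∃ x y z : P, x ≠ y ∧ y ≠ z ∧ x ≠ z ∧ I x l ∧ I y l ∧ I z l) ∧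
  (∀ x : P, ∃ l m n : L, l ≠ m ∧ m ≠ n ∧ l ≠ n ∧ I x l ∧ I x m ∧ I x n)

/-- The induced incidence relation on a subgeometry `(P', L')`. -/
def SubIncid (I : P → L → Prop) (P' : Set P) (L' : Set L) : ↥P' → ↥L' → Prop :=
  fun x l => I x.1 l.1

/-- A subgeometry is full if every point of the ambient geometry incident with one of
its lines belongs to it. -/
def IsFull (I : P → L → Prop) (P' : Set P) (L' : Set L) : Prop :=
  ∀ l ∈ L', ∀ x : P, I x l → x ∈ P'

/-- A geometrical hyperplane: each of its lines contains at least 2 of its points, and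
every line of the ambient geometry either is a line of the subgeometry all of whose
points lie in the subgeometry, or contains exactly one point of the subgeometry. -/
def IsGeomHyperplane (I : P → L → Prop) (P' : Set P) (L' : Set L) : Prop :=
  (∀ l ∈ L', ∃ x y : P, x ≠ y ∧ x ∈ P' ∧ y ∈ P' ∧ I x l ∧ I y l) ∧
  (∀ l : L, (l ∈ L' ∧ ∀ x : P, I x l → x ∈ P') ∨ (l ∉ L' ∧ ∃! x : P, I x l ∧ x ∈ P'))

/-- An ovoid of the subquadrangle `(P', L')`: a set of its points meeting every one of
its lines in exactly one point. -/
def IsOvoid (I : P → L → Prop) (P' : Set P) (L' : Set L) (O : Set P) : Prop :=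
  O ⊆ P' ∧ ∀ l ∈ L', ∃! x : P, x ∈ O ∧ I x l

/-- The ovoid of `S'` subtended by an external point `x`: the points of `P'` collinear
with `x`. -/
def subtendedOvoid (I : P → L → Prop) (P' : Set P) (x : P) : Set P :=
  {y : P | y ∈ P' ∧ Collinear I x y}

/-- The rosette of ovoids determined by a line `l` (not in the subquadrangle): the set
of the ovoids subtended by the external points of `l`. -/
def rosette (I : P → L → Prop) (P' : Set P) (l : L) : Set (Set P) :=
  {O : Set P | ∃ x : P, x ∉ P' ∧ I x l ∧ O = subtendedOvoid I P' x}

/-- Points of the geometry `A = S \ S'`. -/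
abbrev APoint (P' : Set P) : Type := {x : P // x ∉ P'}

/-- Lines of the geometry `A = S \ S'`. -/
abbrev ALine (L' : Set L) : Type := {l : L // l ∉ L'}

/-- Incidence in the geometry `A`. -/
def AIncid (I : P → L → Prop) (P' : Set P) (L' : Set L) :
    APoint P' → ALine L' → Prop :=
  fun x l => I x.1 l.1

/-- Points of the geometry `E`: the subtended ovoids of `S'`. -/
abbrev EPoint (I : P → L → Prop) (P' : Set P) : Type :=
  {O : Set P // ∃ x : P, x ∉ P' ∧ O = subtendedOvoid I P' x}

/-- Lines of the geometry `E`: the rosettes of subtended ovoids of `S'`. -/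
abbrev ELine (I : P → L → Prop) (P' : Set P) (L' : Set L) : Type :=
  {R : Set (Set P) // ∃ l : L, l ∉ L' ∧ R = rosette I P' l}

/-- Incidence in `E`: membership of an ovoid in a rosette. -/
def EIncid (I : P → L → Prop) (P' : Set P) (L' : Set L) :
    EPoint I P' → ELine I P' L' → Prop :=
  fun O R => O.1 ∈ R.1

/-- The canonical projection `π : A → E` on points. -/
def piPoint (I : P → L → Prop) (P' : Set P) : APoint P' → EPoint I P' :=
  fun x => ⟨subtendedOvoid I P' x.1, x.1, x.2, rfl⟩

/-- The canonical projection `π : A → E` on lines. -/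
def piLine (I : P → L → Prop) (P' : Set P) (L' : Set L) : ALine L' → ELine I P' L' :=
  fun l => ⟨rosette I P' l.1, l.1, l.2, rfl⟩

/-- A morphism of point-line geometries: preserves incidence. -/
def IsMorphism {P₁ L₁ P₂ L₂ : Type} (I₁ : P₁ → L₁ → Prop) (I₂ : P₂ → L₂ → Prop)
    (fp : P₁ → P₂) (fl : L₁ → L₂) : Prop :=
  ∀ x l, I₁ x l → I₂ (fp x) (fl l)

/-- A cover: a morphism which is locally bijective, i.e. for every point `x` it induces
a bijection between the lines through `x` and the lines through `fp x`, and dually. -/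
def IsCover {P₁ L₁ P₂ L₂ : Type} (I₁ : P₁ → L₁ → Prop) (I₂ : P₂ → L₂ → Prop)
    (fp : P₁ → P₂) (fl : L₁ → L₂) : Prop :=
  IsMorphism I₁ I₂ fp fl ∧
  (∀ (x : P₁) (m : L₂), I₂ (fp x) m → ∃! l : L₁, I₁ x l ∧ fl l = m) ∧
  (∀ (l : L₁) (y : P₂), I₂ y (fl l) → ∃! x : P₁, I₁ x l ∧ fp x = y)

/-- An isomorphism of point-line geometries: a bijective morphism whose inverse is a
morphism, equivalently a pair of bijections under which incidence corresponds. -/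
def IsIso {P₁ L₁ P₂ L₂ : Type} (I₁ : P₁ → L₁ → Prop) (I₂ : P₂ → L₂ → Prop)
    (fp : P₁ → P₂) (fl : L₁ → L₂) : Prop :=
  Function.Bijective fp ∧ Function.Bijective fl ∧
  ∀ (x : P₁) (l : L₁), I₁ x l ↔ I₂ (fp x) (fl l)

/-- An automorphism of a point-line geometry. -/
def IsAuto (I : P → L → Prop) (fp : P → P) (fl : L → L) : Prop :=
  IsIso I I fp fl

/-- A finite GQ has order `(s, t)` if every line carries `s + 1` points and every point
carries `t + 1` lines. -/
def HasOrder (I : P → L → Prop) (s t : ℕ) : Prop :=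
  (∀ l : L, {x : P | I x l}.ncard = s + 1) ∧
  (∀ x : P, {l : L | I x l}.ncard = t + 1)

/-- Every subtended ovoid of `S'` is subtended by exactly `θ` external points. -/
def AllThetaSubtended (I : P → L → Prop) (P' : Set P) (θ : ℕ) : Prop :=
  ∀ x : P, x ∉ P' →
    {y : P | y ∉ P' ∧ subtendedOvoid I P' y = subtendedOvoid I P' x}.ncard = θ

/-- The perp of a set of points: all points collinear with every point of the set. -/
def perpSet (I : P → L → Prop) (X : Set P) : Set P :=
  {z : P | ∀ y ∈ X, Collinear I z y}

/-- The action of a permutation of the points of `S'` on subsets of `P'`. -/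
def ovMap (P' : Set P) (f : ↥P' → ↥P') (O : Set P) : Set P :=
  {z : P | ∃ y : ↥P', y.1 ∈ O ∧ (f y).1 = z}


/-!
Two external points `u ≠ v` with a common external neighbour `w` subtend different ovoids.
If `u ∼ v`, let `p` be the point where the line `uv` meets `S'`; projecting `u` onto a line
of `S'` missing `p` gives a point `q ∈ O_u` off `uv`, and `q ∈ O_v` would be collinear with
two points of `uv`. Otherwise the line `uw` meets `S'` in a point `p ∈ O_u`, and `p ∈ O_v`
would make `v` collinear with the two points `w ≠ p` of `uw`. Conversely, for `p ∈ O_u` on a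
line `m ∋ u` with `v ∉ m`, the projection of `v` onto `m` is a common neighbour of `u` and
`v`; when it is not external it is the unique point `p` of `m` in `S'`, so `p ∈ O_v`.
-/

section

variable {I : P → L → Prop} {P' : Set P} {L' : Set L}

theorem Collinear.symm {x y : P} (h : Collinear I x y) : Collinear I y x := by
  rcases h with rfl | ⟨l, hxl, hyl⟩
  · exact Or.inl rfl
  · exact Or.inr ⟨l, hyl, hxl⟩

theorem IsGQ.eq_of_collinear_of_not_incident (hGQ : IsGQ I) {x y z : P} {l : L}
    (hxl : ¬ I x l) (hyl : I y l) (hzl : I z l)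
    (hxy : Collinear I x y) (hxz : Collinear I x z) : y = z := by
  obtain ⟨M, hxM, hyM⟩ := hxy.resolve_left (by rintro rfl; exact hxl hyl)
  obtain ⟨N, hxN, hzN⟩ := hxz.resolve_left (by rintro rfl; exact hxl hzl)
  exact congrArg Prod.fst
    ((hGQ.2 x l hxl).unique (y₁ := (y, M)) (y₂ := (z, N)) ⟨hxM, hyM, hyl⟩ ⟨hxN, hzN, hzl⟩)

theorem IsGQ.exists_not_incident (hGQ : IsGQ I) (hThick : Thick I) (p : P) :
    ∃ m : L, ¬ I p m := by
  obtain ⟨l, -, -, -, -, -, hpl, -, -⟩ := hThick.2 p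
  obtain ⟨x, y, -, hxy, -, -, hxl, hyl, -⟩ := hThick.1 l
  obtain ⟨r, hrl, hrp⟩ : ∃ r, I r l ∧ r ≠ p := by
    by_cases hx : x = p
    · exact ⟨y, hyl, hx ▸ hxy.symm⟩
    · exact ⟨x, hxl, hx⟩
  obtain ⟨m₁, m₂, -, hm, -, -, hrm₁, hrm₂, -⟩ := hThick.2 r
  obtain ⟨m, hrm, hml⟩ : ∃ m, I r m ∧ m ≠ l := by
    by_cases h : m₁ = l
    · exact ⟨m₂, hrm₂, h ▸ hm.symm⟩
    · exact ⟨m₁, hrm₁, h⟩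
  exact ⟨m, fun hpm => hml (hGQ.1 r p hrp m l hrm hpm hrl hpl)⟩

theorem IsGeomHyperplane.existsUnique_mem_of_incident (hHyp : IsGeomHyperplane I P' L')
    {x : P} {l : L} (hx : x ∉ P') (hxl : I x l) : ∃! p : P, I p l ∧ p ∈ P' :=
  ((hHyp.2 l).resolve_left fun h => hx (h.2 x hxl)).2

theorem exists_mem_subtendedOvoid_ne (hGQ : IsGQ I) (hSubGQ : IsGQ (SubIncid I P' L'))
    (hSubThick : Thick (SubIncid I P' L')) (hFull : IsFull I P' L')
    {u p : P} (hu : u ∉ P') (hp : p ∈ P') :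
    ∃ q ∈ subtendedOvoid I P' u, q ≠ p := by
  obtain ⟨m, hpm⟩ := hSubGQ.exists_not_incident hSubThick ⟨p, hp⟩
  have hum : ¬ I u m.1 := fun h => hu (hFull m.1 m.2 u h)
  obtain ⟨⟨q, M⟩, ⟨huM, hqM, hqm⟩, -⟩ := hGQ.2 u m.1 hum
  exact ⟨q, ⟨hFull m.1 m.2 q hqm, Or.inr ⟨M, huM, hqM⟩⟩, by rintro rfl; exact hpm hqm⟩

theorem subtendedOvoid_ne_of_incident (hGQ : IsGQ I) (hSubGQ : IsGQ (SubIncid I P' L'))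
    (hSubThick : Thick (SubIncid I P' L')) (hFull : IsFull I P' L')
    (hHyp : IsGeomHyperplane I P' L') {u v : P} {l : L} (hu : u ∉ P') (huv : u ≠ v)
    (hul : I u l) (hvl : I v l) :
    subtendedOvoid I P' u ≠ subtendedOvoid I P' v := by
  intro hO
  obtain ⟨p, ⟨-, hpP⟩, hp_uniq⟩ := hHyp.existsUnique_mem_of_incident hu hul
  obtain ⟨q, hqu, hqp⟩ := exists_mem_subtendedOvoid_ne hGQ hSubGQ hSubThick hFull hu hpP
  have hqv : q ∈ subtendedOvoid I P' v := hO ▸ hqu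
  have hql : ¬ I q l := fun h => hqp (hp_uniq q ⟨h, hqu.1⟩)
  exact huv (hGQ.eq_of_collinear_of_not_incident hql hul hvl hqu.2.symm hqv.2.symm)

theorem subtendedOvoid_ne_of_collinear_of_collinear (hGQ : IsGQ I)
    (hSubGQ : IsGQ (SubIncid I P' L')) (hSubThick : Thick (SubIncid I P' L'))
    (hFull : IsFull I P' L') (hHyp : IsGeomHyperplane I P' L') {u v w : P}
    (hu : u ∉ P') (hw : w ∉ P') (huv : u ≠ v)
    (hwu : Collinear I w u) (hwv : Collinear I w v) :
    subtendedOvoid I P' u ≠ subtendedOvoid I P' v := by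
  rcases hwu with rfl | ⟨m, hwm, hum⟩
  · obtain ⟨l, hwl, hvl⟩ := hwv.resolve_left huv
    exact subtendedOvoid_ne_of_incident hGQ hSubGQ hSubThick hFull hHyp
      hw huv hwl hvl
  rcases hwv with rfl | ⟨n, hwn, hvn⟩
  · exact subtendedOvoid_ne_of_incident hGQ hSubGQ hSubThick hFull hHyp
      hu huv hum hwm
  by_cases hvm : I v m
  · exact subtendedOvoid_ne_of_incident hGQ hSubGQ hSubThick hFull hHyp
      hu huv hum hvm
  intro hO
  obtain ⟨p, ⟨hpm, hpP⟩, -⟩ := hHyp.existsUnique_mem_of_incident hw hwm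
  have hpv : p ∈ subtendedOvoid I P' v := hO ▸ ⟨hpP, Or.inr ⟨m, hum, hpm⟩⟩
  have hwp : w = p :=
    hGQ.eq_of_collinear_of_not_incident hvm hwm hpm (Or.inr ⟨n, hvn, hwn⟩) hpv.2
  exact hw (hwp ▸ hpP)

theorem subtendedOvoid_subset_of_forall_not_collinear (hGQ : IsGQ I)
    (hHyp : IsGeomHyperplane I P' L') {u v : P} (hu : u ∉ P')
    (hno : ¬ ∃ w : P, w ∉ P' ∧ Collinear I w u ∧ Collinear I w v) :
    subtendedOvoid I P' u ⊆ subtendedOvoid I P' v := by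
  rintro p ⟨hpP, rfl | ⟨m, hum, hpm⟩⟩
  · exact absurd hpP hu
  refine ⟨hpP, ?_⟩
  by_cases hvm : I v m
  · exact Or.inr ⟨m, hvm, hpm⟩
  obtain ⟨⟨y, M⟩, ⟨hvM, hyM, hym⟩, -⟩ := hGQ.2 v m hvm
  have hyP : y ∈ P' := by
    by_contra hyP
    exact hno ⟨y, hyP, Or.inr ⟨m, hym, hum⟩, Or.inr ⟨M, hyM, hvM⟩⟩
  have hyp : y = p := (hHyp.existsUnique_mem_of_incident hu hum).unique ⟨hym, hyP⟩ ⟨hpm, hpP⟩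
  exact Or.inr ⟨M, hvM, hyp ▸ hyM⟩

end

theorem statement3_general (I : P → L → Prop) (P' : Set P) (L' : Set L)
    (hGQ : IsGQ I)
    (hSubGQ : IsGQ (SubIncid I P' L')) (hSubThick : Thick (SubIncid I P' L'))
    (hFull : IsFull I P' L') (hHyp : IsGeomHyperplane I P' L')
    (u v : APoint P') (huv : u ≠ v) :
    piPoint I P' u = piPoint I P' v ↔
      ¬ ∃ w : P, w ∉ P' ∧ Collinear I w u.1 ∧ Collinear I w v.1 := by
  rw [show piPoint I P' u = piPoint I P' v ↔ subtendedOvoid I P' u.1 = subtendedOvoid I P' v.1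
    from Subtype.ext_iff]
  constructor
  · rintro hO ⟨w, hw, hwu, hwv⟩
    exact subtendedOvoid_ne_of_collinear_of_collinear hGQ hSubGQ hSubThick hFull hHyp
      u.2 hw (Subtype.coe_ne_coe.mpr huv) hwu hwv hO
  · intro hno
    have hno' : ¬ ∃ w : P, w ∉ P' ∧ Collinear I w v.1 ∧ Collinear I w u.1 :=
      fun ⟨w, hw, hwv, hwu⟩ => hno ⟨w, hw, hwu, hwv⟩
    exact (subtendedOvoid_subset_of_forall_not_collinear hGQ hHyp u.2 hno).antisymm
      (subtendedOvoid_subset_of_forall_not_collinear hGQ hHyp v.2 hno')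

/-- for distinct points `u, v` of `A`, `π(u) = π(v)` iff no point of `A`
is collinear (in `S`) with both `u` and `v`. -/
theorem statement3 (I : P → L → Prop) (P' : Set P) (L' : Set L)
    (hGQ : IsGQ I) (hThick : Thick I)
    (hSubGQ : IsGQ (SubIncid I P' L')) (hSubThick : Thick (SubIncid I P' L'))
    (hFull : IsFull I P' L') (hHyp : IsGeomHyperplane I P' L')
    (u v : APoint P') (huv : u ≠ v) :
    piPoint I P' u = piPoint I P' v ↔
      ¬ ∃ w : P, w ∉ P' ∧ Collinear I w u.1 ∧ Collinear I w v.1 :=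
  statement3_general I P' L' hGQ hSubGQ hSubThick hFull hHyp u v huv

end GQpaper
end

section
/- Let S be a finite generalized quadrangle of order (s,t) with s ≥ 2, S' a proper full subquadrangle of order (s,t') with t = s·t' and every subtended ovoid of S' θ-subtended (θ > 1), let A be the geometry of points and lines of S not in S', E the geometry of subtended ovoids and rosettes of S', and let γ : A → E be a θ-cover. Then for every point x of S', all the lines of A whose image under γ is a rosette whose ovoids share the point x are, viewed as lines of S, incident with one common point x** of S'. -/
namespace GQpaper

variable {P L : Type}

/-!
An external line meets `S'` in exactly one point: since `t = s t'`, an external point is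
collinear with at least `t + 1` points of `S'` (an ovoid of `S'`), no two of them on a common
line through it, so each of the `t + 1` lines through it meets `S'`. As `GQ`s have no triangles,
the ovoids of the rosette of an external line `l` have exactly the point of `S'` on `l` in
common. Through an ovoid `O` of `E` pass at most `t + 1` rosettes and every point of `O` is the
common point of one of them, so distinct rosettes through `O` have distinct common points; as
`γ` is locally bijective, through a point of `A` there is at most one line whose image has
common point `x`. Two lines `U₀, U` of `A` whose images have common point `x` must meet, for
otherwise every external point of `U₀` would be collinear with the point of `S'` on `U`, a
triangle. Meeting outside `S'` they coincide, so all such lines pass through the point of `S'`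
on `U₀`.
-/

theorem _root_.Set.ncard_le_ncard_of_forall_subsingleton {α β : Type*} [Finite β]
    {s : Set α} {t : Set β} (r : α → β → Prop) (hs : ∀ a ∈ s, ∃ b ∈ t, r a b)
    (ht : ∀ b ∈ t, {a | a ∈ s ∧ r a b}.Subsingleton) : s.ncard ≤ t.ncard := by
  rcases s.eq_empty_or_nonempty with rfl | ⟨a, ha⟩
  · simp
  have : Nonempty β := ⟨(hs a ha).choose⟩
  choose! f hft hf using hs
  exact Set.ncard_le_ncard_of_injOn f hft
    fun a ha a' ha' h => ht (f a) (hft a ha) ⟨ha, hf a ha⟩ ⟨ha', h ▸ hf a' ha'⟩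

theorem _root_.Set.ncard_biUnion_of_ncard_eq {ι α : Type*} [Finite α] {W : Set ι}
    (hW : W.Finite) {N : ι → Set α} {k : ℕ} (hd : W.PairwiseDisjoint N)
    (hN : ∀ i ∈ W, (N i).ncard = k) : (⋃ i ∈ W, N i).ncard = W.ncard * k := by
  rw [hW.ncard_biUnion (fun i _ => Set.toFinite _) hd, finsum_mem_congr rfl hN,
    finsum_mem_eq_finite_toFinset_sum _ hW, Finset.sum_const, smul_eq_mul,
    Set.ncard_eq_toFinset_card _ hW]

section Geometry

variable {I : P → L → Prop} {s t : ℕ}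

theorem HasOrder.exists_line_incid (h : HasOrder I s t) (x : P) : ∃ l, I x l :=
  Set.nonempty_of_ncard_ne_zero (s := {l | I x l}) (by rw [h.2 x]; omega)

theorem IsGQ.proj_unique (hGQ : IsGQ I) {x y₁ y₂ : P} {l M₁ M₂ : L} (hxl : ¬ I x l)
    (h₁ : I x M₁ ∧ I y₁ M₁ ∧ I y₁ l) (h₂ : I x M₂ ∧ I y₂ M₂ ∧ I y₂ l) :
    (y₁, M₁) = (y₂, M₂) :=
  (hGQ.2 x l hxl).unique h₁ h₂

/-- There are no triangles in a generalized quadrangle. -/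
theorem IsGQ.incid_of_collinear_of_collinear (hGQ : IsGQ I) {w y₁ y₂ : P} {l : L}
    (h₁ : I y₁ l) (h₂ : I y₂ l) (hne : y₁ ≠ y₂)
    (hw₁ : Collinear I y₁ w) (hw₂ : Collinear I y₂ w) : I w l := by
  by_contra hwl
  rcases hw₁ with rfl | ⟨N₁, hy₁N₁, hwN₁⟩
  · exact hwl h₁
  rcases hw₂ with rfl | ⟨N₂, hy₂N₂, hwN₂⟩
  · exact hwl h₂
  exact hne (congrArg Prod.fst (hGQ.proj_unique hwl ⟨hwN₁, hy₁N₁, h₁⟩ ⟨hwN₂, hy₂N₂, h₂⟩))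

theorem IsGQ.mul_add_one_le_ncard_of_isOvoid [Finite P] [Finite L] [Nonempty L]
    (hGQ : IsGQ I) (hOrd : HasOrder I s t) {O : Set P}
    (hO : IsOvoid I Set.univ Set.univ O) : s * t + 1 ≤ O.ncard := by
  obtain ⟨m₀⟩ := ‹Nonempty L›
  obtain ⟨c, ⟨hcO, hcm₀⟩, hc⟩ := hO.2 m₀ trivial
  set N := ⋃ w ∈ {x | I x m₀} \ {c}, {n | I w n} \ {m₀}
  have hN : N.ncard = s * t := by
    rw [Set.ncard_biUnion_of_ncard_eq (Set.toFinite _),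
      Set.ncard_sdiff_singleton_of_mem (s := {x | I x m₀}) hcm₀, hOrd.1, Nat.add_sub_cancel]
    · rintro w ⟨hwm₀, -⟩ w' ⟨hw'm₀, -⟩ hne
      refine Set.disjoint_left.2 fun n ⟨hwn, hn⟩ ⟨hw'n, _⟩ => hn ?_
      exact hGQ.1 w w' hne n m₀ hwn hw'n hwm₀ hw'm₀
    · intro w hw
      rw [Set.ncard_sdiff_singleton_of_mem (s := {n | I w n}) hw.1, hOrd.2, Nat.add_sub_cancel]
  -- a point of `O \ {c}` lies off `m₀`, so at most one line of `N` (its projection onto `m₀`)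
  -- passes through it
  have hNO : N.ncard ≤ (O \ {c}).ncard := by
    refine Set.ncard_le_ncard_of_forall_subsingleton (fun n u => I u n) ?_ ?_
    · simp only [N, Set.mem_iUnion]
      rintro n ⟨w, ⟨hwm₀, hwc⟩, hwn, hnm₀⟩
      obtain ⟨u, ⟨huO, hun⟩, -⟩ := hO.2 n trivial
      refine ⟨u, ⟨huO, ?_⟩, hun⟩
      rintro rfl
      exact hnm₀ (hGQ.1 u w (Ne.symm hwc) n m₀ hun hwn hcm₀ hwm₀)
    · rintro u ⟨huO, huc⟩ n ⟨hn, hun⟩ n' ⟨hn', hun'⟩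
      simp only [N, Set.mem_iUnion] at hn hn'
      obtain ⟨w, ⟨hwm₀, -⟩, hwn, -⟩ := hn
      obtain ⟨w', ⟨hw'm₀, -⟩, hw'n', -⟩ := hn'
      have hum₀ : ¬ I u m₀ := fun h => huc (hc u ⟨huO, h⟩)
      exact congrArg Prod.snd (hGQ.proj_unique hum₀ ⟨hun, hwn, hwm₀⟩ ⟨hun', hw'n', hw'm₀⟩)
  have hO₀ : 0 < O.ncard := (Set.ncard_pos).2 ⟨c, hcO⟩
  rw [Set.ncard_sdiff_singleton_of_mem hcO] at hNO
  omega

section Cover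

variable {P₁ L₁ P₂ L₂ : Type} {I₁ : P₁ → L₁ → Prop} {I₂ : P₂ → L₂ → Prop}
  {fp : P₁ → P₂} {fl : L₁ → L₂}

theorem IsCover.injOn_lines (h : IsCover I₁ I₂ fp fl) (x : P₁) : Set.InjOn fl {l | I₁ x l} :=
  fun _ h₁ _ h₂ he => (h.2.1 x _ (h.1 x _ h₁)).unique ⟨h₁, rfl⟩ ⟨h₂, he.symm⟩

theorem IsCover.injOn_points (h : IsCover I₁ I₂ fp fl) (l : L₁) : Set.InjOn fp {x | I₁ x l} :=
  fun _ h₁ _ h₂ he => (h.2.2 l _ (h.1 _ l h₁)).unique ⟨h₁, rfl⟩ ⟨h₂, he.symm⟩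

theorem IsCover.ncard_lines_eq [Finite L₁] (h : IsCover I₁ I₂ fp fl) (x : P₁) :
    {m | I₂ (fp x) m}.ncard = {l | I₁ x l}.ncard := by
  have himage : fl '' {l | I₁ x l} = {m | I₂ (fp x) m} := by
    ext m
    refine ⟨?_, fun hm => ?_⟩
    · rintro ⟨l, hl, rfl⟩
      exact h.1 x l hl
    · obtain ⟨l, hl, rfl⟩ := (h.2.1 x m hm).exists
      exact ⟨l, hl, rfl⟩
  rw [← himage, (h.injOn_lines x).ncard_image]

end Cover

variable {P' : Set P} {L' : Set L} {t' : ℕ}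

theorem HasOrder.exists_sub_line_incid (h : HasOrder (SubIncid I P' L') s t') :
    ∀ x ∈ P', ∃ m ∈ L', I x m := fun x hx =>
  let ⟨m, hm⟩ := h.exists_line_incid ⟨x, hx⟩
  ⟨m.1, m.2, hm⟩

theorem IsOvoid.preimage_val {O : Set P} (hO : IsOvoid I P' L' O) :
    IsOvoid (SubIncid I P' L') Set.univ Set.univ (Subtype.val ⁻¹' O) := by
  refine ⟨Set.subset_univ _, fun m _ => ?_⟩
  obtain ⟨x, ⟨hxO, hxm⟩, hx⟩ := hO.2 m.1 m.2
  exact ⟨⟨x, hO.1 hxO⟩, ⟨hxO, hxm⟩, fun y hy => Subtype.ext (hx y.1 hy)⟩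

theorem IsOvoid.mul_add_one_le_ncard [Finite P] [Finite L] (hSubGQ : IsGQ (SubIncid I P' L'))
    (hSubOrd : HasOrder (SubIncid I P' L') s t') (hP' : P'.Nonempty) {O : Set P}
    (hO : IsOvoid I P' L' O) : s * t' + 1 ≤ O.ncard := by
  obtain ⟨m, -⟩ := hSubOrd.exists_line_incid ⟨hP'.some, hP'.some_mem⟩
  have : Nonempty L' := ⟨m⟩
  rw [← Set.ncard_preimage_of_injective_subset_range (f := ((↑) : P' → P))
    Subtype.val_injective (by rw [Subtype.range_coe]; exact hO.1)]
  exact hSubGQ.mul_add_one_le_ncard_of_isOvoid hSubOrd hO.preimage_val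

theorem isOvoid_subtendedOvoid (hGQ : IsGQ I) (hFull : IsFull I P' L') {y : P} (hy : y ∉ P') :
    IsOvoid I P' L' (subtendedOvoid I P' y) := by
  refine ⟨fun _ hw => hw.1, fun m hm => ?_⟩
  have hym : ¬ I y m := fun h => hy (hFull m hm y h)
  obtain ⟨⟨z, N⟩, ⟨hyN, hzN, hzm⟩, hproj⟩ := hGQ.2 y m hym
  refine ⟨z, ⟨⟨hFull m hm z hzm, Or.inr ⟨N, hyN, hzN⟩⟩, hzm⟩, ?_⟩
  rintro w ⟨⟨hw, rfl | ⟨N', hyN', hwN'⟩⟩, hwm⟩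
  · exact absurd hw hy
  · exact congrArg Prod.fst (hproj (w, N') ⟨hyN', hwN', hwm⟩)

theorem subsingleton_sub_points_of_notMem (hGQ : IsGQ I) (hSubGQ : IsGQ (SubIncid I P' L'))
    (hlines : ∀ x ∈ P', ∃ m ∈ L', I x m) {l : L} (hl : l ∉ L') :
    {x | x ∈ P' ∧ I x l}.Subsingleton := by
  rintro x ⟨hx, hxl⟩ y ⟨hy, hyl⟩
  by_contra hne
  obtain ⟨m, hm, hym⟩ := hlines y hy
  by_cases hxm : I x m
  · exact hl (hGQ.1 x y hne l m hxl hyl hxm hym ▸ hm)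
  -- the projection of `x` onto `m` inside `S'` is also its projection in `S`, namely `(y, l)`
  obtain ⟨⟨z, M⟩, hzM, -⟩ := hSubGQ.2 ⟨x, hx⟩ ⟨m, hm⟩ hxm
  have hMl : M.1 = l := congrArg Prod.snd (hGQ.proj_unique hxm hzM ⟨hxl, hyl, hym⟩)
  exact hl (hMl ▸ M.2)

theorem nontrivial_external_points [Finite P] (hGQ : IsGQ I)
    (hSubGQ : IsGQ (SubIncid I P' L')) (hlines : ∀ x ∈ P', ∃ m ∈ L', I x m)
    (hOrd : HasOrder I s t) (hs : 2 ≤ s) {l : L} (hl : l ∉ L') :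
    {x | x ∉ P' ∧ I x l}.Nontrivial := by
  have hsub : {x | x ∈ P' ∧ I x l}.ncard ≤ 1 :=
    Set.ncard_le_one_iff_subsingleton.2 (subsingleton_sub_points_of_notMem hGQ hSubGQ hlines hl)
  have hcover : {x | I x l} ⊆ {x | x ∉ P' ∧ I x l} ∪ {x | x ∈ P' ∧ I x l} := by
    intro x hx
    by_cases hxP : x ∈ P'
    exacts [Or.inr ⟨hxP, hx⟩, Or.inl ⟨hxP, hx⟩]
  have := (Set.ncard_le_ncard hcover).trans (Set.ncard_union_le _ _)
  rw [hOrd.1 l] at this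
  exact Set.one_lt_ncard_iff_nontrivial.1 (by omega)

theorem exists_sub_point_incid [Finite P] [Finite L] (hGQ : IsGQ I) (hOrd : HasOrder I s t)
    (hSubGQ : IsGQ (SubIncid I P' L')) (hSubOrd : HasOrder (SubIncid I P' L') s t')
    (hFull : IsFull I P' L') (htst : t = s * t') (hP' : P'.Nonempty) (l : L) :
    ∃ x ∈ P', I x l := by
  obtain ⟨y, hyl⟩ := Set.nonempty_of_ncard_ne_zero (s := {x | I x l}) (by rw [hOrd.1 l]; omega)
  by_cases hy : y ∈ P'
  · exact ⟨y, hy, hyl⟩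
  by_contra! hno
  have hO := (isOvoid_subtendedOvoid hGQ hFull hy).mul_add_one_le_ncard hSubGQ hSubOrd hP'
  -- joining `y` to the points of its ovoid gives distinct lines through `y`, none of them `l`
  have hlines : (subtendedOvoid I P' y).ncard ≤ ({n | I y n} \ {l}).ncard := by
    refine Set.ncard_le_ncard_of_forall_subsingleton (fun w n => I w n) ?_ ?_
    · rintro w ⟨hw, rfl | ⟨n, hyn, hwn⟩⟩
      · exact absurd hw hy
      · exact ⟨n, ⟨hyn, fun h => hno w hw (h ▸ hwn)⟩, hwn⟩
    · rintro n ⟨hyn, -⟩ w ⟨⟨hw, -⟩, hwn⟩ w' ⟨⟨hw', -⟩, hw'n⟩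
      have hn : n ∉ L' := fun h => hy (hFull n h y hyn)
      exact subsingleton_sub_points_of_notMem hGQ hSubGQ hSubOrd.exists_sub_line_incid hn
        ⟨hw, hwn⟩ ⟨hw', hw'n⟩
  rw [Set.ncard_sdiff_singleton_of_mem (s := {n | I y n}) hyl, hOrd.2] at hlines
  omega

theorem mem_sInter_rosette {l : L} {x : P} (hx : x ∈ P') (hxl : I x l) :
    x ∈ ⋂₀ rosette I P' l := by
  rintro _ ⟨u, -, hul, rfl⟩
  exact ⟨hx, Or.inr ⟨l, hul, hxl⟩⟩

theorem sInter_rosette_subset [Finite P] (hGQ : IsGQ I) (hSubGQ : IsGQ (SubIncid I P' L'))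
    (hlines : ∀ x ∈ P', ∃ m ∈ L', I x m) (hOrd : HasOrder I s t) (hs : 2 ≤ s) {l : L}
    (hl : l ∉ L') : ⋂₀ rosette I P' l ⊆ {x | x ∈ P' ∧ I x l} := by
  intro x hx
  obtain ⟨y₁, ⟨hy₁, hy₁l⟩, y₂, ⟨hy₂, hy₂l⟩, hne⟩ :=
    nontrivial_external_points hGQ hSubGQ hlines hOrd hs hl
  have h₁ := hx _ ⟨y₁, hy₁, hy₁l, rfl⟩
  have h₂ := hx _ ⟨y₂, hy₂, hy₂l, rfl⟩
  exact ⟨h₁.1, hGQ.incid_of_collinear_of_collinear hy₁l hy₂l hne h₁.2 h₂.2⟩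

theorem sInter_eLine_subsingleton [Finite P] (hGQ : IsGQ I) (hSubGQ : IsGQ (SubIncid I P' L'))
    (hlines : ∀ x ∈ P', ∃ m ∈ L', I x m) (hOrd : HasOrder I s t) (hs : 2 ≤ s)
    (R : ELine I P' L') : (⋂₀ R.1).Subsingleton := by
  obtain ⟨l, hl, hR⟩ := R.2
  rw [hR]
  exact (subsingleton_sub_points_of_notMem hGQ hSubGQ hlines hl).anti
    (sInter_rosette_subset hGQ hSubGQ hlines hOrd hs hl)

theorem exists_eLine_mem_sInter (hFull : IsFull I P' L') {z w : P} (hz : z ∉ P')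
    (hw : w ∈ subtendedOvoid I P' z) :
    ∃ R : ELine I P' L', subtendedOvoid I P' z ∈ R.1 ∧ w ∈ ⋂₀ R.1 := by
  obtain ⟨hwP, rfl | ⟨M, hzM, hwM⟩⟩ := hw
  · exact absurd hwP hz
  have hM : M ∉ L' := fun h => hz (hFull M h z hzM)
  exact ⟨⟨rosette I P' M, M, hM, rfl⟩, ⟨z, hz, hzM, rfl⟩, mem_sInter_rosette hwP hwM⟩

variable {gp : APoint P' → EPoint I P'} {gl : ALine L' → ELine I P' L'}

theorem mem_sInter_of_mem_of_mem (hGQ : IsGQ I)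
    (hcov : IsCover (AIncid I P' L') (EIncid I P' L') gp gl) {N : ALine L'} {y z : APoint P'}
    (hy : AIncid I P' L' y N) (hz : AIncid I P' L' z N) (hyz : y ≠ z) {x : P}
    (hxy : x ∈ (gp y).1) (hxz : x ∈ (gp z).1) : x ∈ ⋂₀ (gl N).1 := by
  obtain ⟨l, -, hN⟩ := (gl N).2
  have hgp : gp y ≠ gp z := fun h => hyz (hcov.injOn_points N hy hz h)
  obtain ⟨a, -, hal, ha⟩ : (gp y).1 ∈ rosette I P' l := hN ▸ hcov.1 y N hy
  obtain ⟨b, -, hbl, hb⟩ : (gp z).1 ∈ rosette I P' l := hN ▸ hcov.1 z N hz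
  have hab : a ≠ b := by
    rintro rfl
    exact hgp (Subtype.ext (ha.trans hb.symm))
  rw [ha] at hxy
  rw [hb] at hxz
  rw [hN]
  exact mem_sInter_rosette hxy.1 (hGQ.incid_of_collinear_of_collinear hal hbl hab hxy.2 hxz.2)

theorem line_eq_of_mem_sInter [Finite P] [Finite L] (hGQ : IsGQ I) (hOrd : HasOrder I s t)
    (hs : 2 ≤ s) (hSubGQ : IsGQ (SubIncid I P' L'))
    (hSubOrd : HasOrder (SubIncid I P' L') s t') (hFull : IsFull I P' L') (htst : t = s * t')
    (hcov : IsCover (AIncid I P' L') (EIncid I P' L') gp gl) {y : APoint P'} {V W : ALine L'}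
    (hyV : AIncid I P' L' y V) (hyW : AIncid I P' L' y W) {x : P}
    (hxV : x ∈ ⋂₀ (gl V).1) (hxW : x ∈ ⋂₀ (gl W).1) : V = W := by
  by_contra hVW
  have hglVW : gl V ≠ gl W := fun h => hVW (hcov.injOn_lines y hyV hyW h)
  obtain ⟨z, hz, hOz⟩ := (gp y).2
  have hxO : x ∈ (gp y).1 := hxV _ (hcov.1 y V hyV)
  have hP' : P'.Nonempty := ⟨x, (hOz ▸ hxO).1⟩
  have hO : t + 1 ≤ (gp y).1.ncard := by
    rw [hOz, htst]
    exact (isOvoid_subtendedOvoid hGQ hFull hz).mul_add_one_le_ncard hSubGQ hSubOrd hP'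
  have hRy : {R | EIncid I P' L' (gp y) R}.ncard ≤ t + 1 := by
    rw [hcov.ncard_lines_eq y, ← hOrd.2 y.1]
    exact Set.ncard_le_ncard_of_injOn Subtype.val (fun V hV => hV) Subtype.val_injective.injOn
  -- each point of `gp y` is common to the ovoids of exactly one line of `E` through `gp y`,
  -- and `x` is common to those of both `gl V` and `gl W`
  have hORy : (gp y).1.ncard ≤ ({R | EIncid I P' L' (gp y) R} \ {gl W}).ncard := by
    refine Set.ncard_le_ncard_of_forall_subsingleton (fun w R => w ∈ ⋂₀ R.1) ?_ ?_
    · intro w hw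
      obtain ⟨R, hR, hwR⟩ := exists_eLine_mem_sInter hFull hz (hOz ▸ hw)
      by_cases hRW : R = gl W
      · subst hRW
        have hwx : w = x := sInter_eLine_subsingleton hGQ hSubGQ hSubOrd.exists_sub_line_incid
          hOrd hs (gl W) hwR hxW
        exact ⟨gl V, ⟨hcov.1 y V hyV, hglVW⟩, hwx ▸ hxV⟩
      · refine ⟨R, ⟨?_, hRW⟩, hwR⟩
        show (gp y).1 ∈ R.1
        rwa [hOz]
    · rintro R - w ⟨-, hw⟩ w' ⟨-, hw'⟩
      exact sInter_eLine_subsingleton hGQ hSubGQ hSubOrd.exists_sub_line_incid hOrd hs R hw hw'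
  rw [Set.ncard_sdiff_singleton_of_mem (s := {R | EIncid I P' L' (gp y) R}) (hcov.1 y W hyW)]
    at hORy
  omega

/-- The projection of `y` onto `U` is `c`: were it an external point `z`, the line `yz` would
be a second line of `A` through `y` whose image has `x` in all its ovoids. -/
theorem collinear_of_not_meet [Finite P] [Finite L] (hGQ : IsGQ I) (hOrd : HasOrder I s t)
    (hs : 2 ≤ s) (hSubGQ : IsGQ (SubIncid I P' L'))
    (hSubOrd : HasOrder (SubIncid I P' L') s t') (hFull : IsFull I P' L') (htst : t = s * t')
    (hcov : IsCover (AIncid I P' L') (EIncid I P' L') gp gl) {x : P} {U₀ U : ALine L'}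
    (hxU₀ : x ∈ ⋂₀ (gl U₀).1) (hxU : x ∈ ⋂₀ (gl U).1) (hdisj : ∀ w, I w U₀.1 → ¬ I w U.1)
    {c : P} (hc : c ∈ P') (hcU : I c U.1) {y : P} (hy : y ∉ P') (hyU₀ : I y U₀.1) :
    Collinear I y c := by
  obtain ⟨⟨z, N⟩, ⟨hyN, hzN, hzU⟩, -⟩ := hGQ.2 y U.1 (hdisj y hyU₀)
  by_cases hz : z ∈ P'
  · have hcz : c = z := subsingleton_sub_points_of_notMem hGQ hSubGQ
      hSubOrd.exists_sub_line_incid U.2 ⟨hc, hcU⟩ ⟨hz, hzU⟩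
    exact Or.inr ⟨N, hyN, hcz ▸ hzN⟩
  exfalso
  have hN : N ∉ L' := fun h => hy (hFull N h y hyN)
  have hyz : (⟨y, hy⟩ : APoint P') ≠ ⟨z, hz⟩ := fun h => by
    obtain rfl : y = z := congrArg Subtype.val h
    exact hdisj y hyU₀ hzU
  have hxN : x ∈ ⋂₀ (gl ⟨N, hN⟩).1 := mem_sInter_of_mem_of_mem hGQ hcov
    (N := ⟨N, hN⟩) (y := ⟨y, hy⟩) (z := ⟨z, hz⟩) hyN hzN hyz
    (hxU₀ _ (hcov.1 ⟨y, hy⟩ U₀ hyU₀)) (hxU _ (hcov.1 ⟨z, hz⟩ U hzU))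
  have hU₀N : U₀ = ⟨N, hN⟩ := line_eq_of_mem_sInter hGQ hOrd hs hSubGQ hSubOrd hFull htst hcov
    (y := ⟨y, hy⟩) hyU₀ hyN hxU₀ hxN
  exact hdisj z (hU₀N ▸ hzN) hzU

theorem exists_incid_incid_of_mem_sInter [Finite P] [Finite L] (hGQ : IsGQ I)
    (hOrd : HasOrder I s t) (hs : 2 ≤ s) (hSubGQ : IsGQ (SubIncid I P' L'))
    (hSubOrd : HasOrder (SubIncid I P' L') s t') (hFull : IsFull I P' L') (htst : t = s * t')
    (hcov : IsCover (AIncid I P' L') (EIncid I P' L') gp gl) {x : P} (hx : x ∈ P')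
    {U₀ U : ALine L'} (hxU₀ : x ∈ ⋂₀ (gl U₀).1) (hxU : x ∈ ⋂₀ (gl U).1) :
    ∃ w, I w U₀.1 ∧ I w U.1 := by
  by_contra! hdisj
  obtain ⟨c, hc, hcU⟩ := exists_sub_point_incid hGQ hOrd hSubGQ hSubOrd hFull htst ⟨x, hx⟩ U.1
  obtain ⟨y₁, ⟨hy₁, hy₁U₀⟩, y₂, ⟨hy₂, hy₂U₀⟩, hne⟩ :=
    nontrivial_external_points hGQ hSubGQ hSubOrd.exists_sub_line_incid hOrd hs U₀.2
  have hcol (y : P) (hy : y ∉ P') (hyU₀ : I y U₀.1) : Collinear I y c :=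
    collinear_of_not_meet hGQ hOrd hs hSubGQ hSubOrd hFull htst hcov hxU₀ hxU hdisj hc hcU hy hyU₀
  exact hdisj c (hGQ.incid_of_collinear_of_collinear hy₁U₀ hy₂U₀ hne
    (hcol y₁ hy₁ hy₁U₀) (hcol y₂ hy₂ hy₂U₀)) hcU

end Geometry

theorem statement16_general {P L : Type} [Finite P] [Finite L]
    (I : P → L → Prop) (P' : Set P) (L' : Set L) (s t t' : ℕ)
    (hGQ : IsGQ I) (hOrd : HasOrder I s t) (hs : 2 ≤ s)
    (hSubGQ : IsGQ (SubIncid I P' L'))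
    (hSubOrd : HasOrder (SubIncid I P' L') s t')
    (hFull : IsFull I P' L')
    (htst : t = s * t')
    (gp : APoint P' → EPoint I P') (gl : ALine L' → ELine I P' L')
    (hcov : IsCover (AIncid I P' L') (EIncid I P' L') gp gl) :
    ∀ x ∈ P', ∃ xs ∈ P', ∀ U : ALine L',
      (∀ O ∈ (gl U).1, x ∈ O) → I xs U.1 := by
  intro x hx
  by_cases hbased : ∃ U₀ : ALine L', x ∈ ⋂₀ (gl U₀).1
  swap
  · exact ⟨x, hx, fun U hU => absurd ⟨U, hU⟩ hbased⟩
  obtain ⟨U₀, hxU₀⟩ := hbased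
  obtain ⟨c, hc, hcU₀⟩ :=
    exists_sub_point_incid hGQ hOrd hSubGQ hSubOrd hFull htst ⟨x, hx⟩ U₀.1
  refine ⟨c, hc, fun U hxU => ?_⟩
  obtain ⟨w, hwU₀, hwU⟩ := exists_incid_incid_of_mem_sInter hGQ hOrd hs hSubGQ hSubOrd hFull
    htst hcov hx hxU₀ hxU
  by_cases hw : w ∈ P'
  · rwa [subsingleton_sub_points_of_notMem hGQ hSubGQ hSubOrd.exists_sub_line_incid U₀.2
      ⟨hc, hcU₀⟩ ⟨hw, hwU₀⟩]
  · rwa [line_eq_of_mem_sInter hGQ hOrd hs hSubGQ hSubOrd hFull htst hcov (y := ⟨w, hw⟩)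
      hwU hwU₀ hxU hxU₀]

/-- for a θ-cover `γ : A → E` and every point `x` of `S'`, all the lines
of `A` whose γ-image is a rosette whose ovoids share `x` pass (in `S`) through one
common point `x**` of `S'`. -/
theorem statement16 {P L : Type} [Finite P] [Finite L]
    (I : P → L → Prop) (P' : Set P) (L' : Set L) (s t t' θ : ℕ)
    (hGQ : IsGQ I) (hOrd : HasOrder I s t) (hs : 2 ≤ s)
    (hSubGQ : IsGQ (SubIncid I P' L'))
    (hSubOrd : HasOrder (SubIncid I P' L') s t')
    (hFull : IsFull I P' L')
    (hProper : P' ≠ Set.univ ∨ L' ≠ Set.univ)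
    (htst : t = s * t') (hθsub : AllThetaSubtended I P' θ) (hθ : 1 < θ)
    (gp : APoint P' → EPoint I P') (gl : ALine L' → ELine I P' L')
    (hcov : IsCover (AIncid I P' L') (EIncid I P' L') gp gl)
    (hfibp : ∀ O : EPoint I P', (gp ⁻¹' {O}).ncard = θ)
    (hfibl : ∀ R : ELine I P' L', (gl ⁻¹' {R}).ncard = θ) :
    ∀ x ∈ P', ∃ xs ∈ P', ∀ U : ALine L',
      (∀ O ∈ (gl U).1, x ∈ O) → I xs U.1 :=
  statement16_general I P' L' s t t' hGQ hOrd hs hSubGQ hSubOrd hFull htst gp gl hcov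

end GQpaper
end

section
/- Let S be a thick generalized quadrangle and S' a thick full proper subquadrangle of S. Then for every point x of S not belonging to S', the set x⊥ ∩ P' (the points of S' collinear in S with x) is an ovoid of S'. -/
namespace GQpaper

variable {P L : Type}

theorem IsGQ.existsUnique_collinear_of_not_incident {I : P → L → Prop} (hGQ : IsGQ I)
    {x : P} {l : L} (hxl : ¬ I x l) : ∃! y : P, I y l ∧ Collinear I x y := by
  obtain ⟨⟨y, M⟩, ⟨hxM, hyM, hyl⟩, huniq⟩ := hGQ.2 x l hxl
  refine ⟨y, ⟨hyl, Or.inr ⟨M, hxM, hyM⟩⟩, ?_⟩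
  rintro z ⟨hzl, rfl | ⟨N, hxN, hzN⟩⟩
  · exact absurd hzl hxl
  · exact congrArg Prod.fst (huniq (z, N) ⟨hxN, hzN, hzl⟩)

theorem IsFull.not_incident_of_not_mem {I : P → L → Prop} {P' : Set P} {L' : Set L}
    (hFull : IsFull I P' L') {x : P} (hx : x ∉ P') {l : L} (hl : l ∈ L') : ¬ I x l :=
  fun hxl => hx (hFull l hl x hxl)

theorem mem_subtendedOvoid_and_incident_iff {I : P → L → Prop} {P' : Set P} {L' : Set L}
    (hFull : IsFull I P' L') {l : L} (hl : l ∈ L') (x y : P) :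
    y ∈ subtendedOvoid I P' x ∧ I y l ↔ I y l ∧ Collinear I x y :=
  ⟨fun ⟨⟨_, hxy⟩, hyl⟩ => ⟨hyl, hxy⟩, fun ⟨hyl, hxy⟩ => ⟨⟨hFull l hl y hyl, hxy⟩, hyl⟩⟩

theorem statement18_general (I : P → L → Prop) (P' : Set P) (L' : Set L)
    (hGQ : IsGQ I)
    (hFull : IsFull I P' L') :
    ∀ x : P, x ∉ P' → IsOvoid I P' L' (subtendedOvoid I P' x) := by
  intro x hx
  refine ⟨fun y hy => hy.1, fun l hl => ?_⟩
  rw [existsUnique_congr (mem_subtendedOvoid_and_incident_iff hFull hl x)]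
  exact hGQ.existsUnique_collinear_of_not_incident (hFull.not_incident_of_not_mem hx hl)

/-- in a thick GQ with a thick full proper subquadrangle, every external
point subtends an ovoid of the subquadrangle. -/
theorem statement18 (I : P → L → Prop) (P' : Set P) (L' : Set L)
    (hGQ : IsGQ I) (hThick : Thick I)
    (hSubGQ : IsGQ (SubIncid I P' L')) (hSubThick : Thick (SubIncid I P' L'))
    (hFull : IsFull I P' L')
    (hProper : P' ≠ Set.univ ∨ L' ≠ Set.univ) :
    ∀ x : P, x ∉ P' → IsOvoid I P' L' (subtendedOvoid I P' x) :=
  statement18_general I P' L' hGQ hFull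

end GQpaper
end
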